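/- arXiv:2004.13778 — 3 statements merged into one kernel-verified Lean document; each statement's English description precedes it below -/
import Mathlib

section
/- Let A : H ⇉ H be an α-comonotone set-valued operator on a real Hilbert space H, where α ∈ ℝ, and let γ > 0 satisfy γ + α > 0. Then the domain of the resolvent J_{γA} := (Id + γA)^{-1} is all of H if and only if A is maximally α-comonotone. -/
/-!
Writing `s = x + γ • u` for `u ∈ A x`, comonotonicity gives
`(γ + α) ‖u - v‖² ≤ ⟪s - t, u - v⟫`: the map `s ↦ u` is `(γ + α)`-cocoercive on the range
of `Id + γA`. In particular `Id + γA` is injective, so an operator with full resolvent domain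
has no proper comonotone extension.

Conversely, with `L = 1 / (2 (γ + α))`, cocoercivity says exactly that `s ↦ u + L (z - s)` is
`L`-Lipschitz, and `‖w - u - L (z - s)‖ ≤ L ‖z - s‖` says exactly that `(z - γ w, w)` is
comonotonically related to `(x, u)`. Kirszbraun's theorem supplies such a `w` for all graph
points at once, and maximality puts `(z - γ w, w)` into the graph. Kirszbraun's theorem is
proved for finitely many balls by minimising the largest excess `‖v - c i‖² - L² ‖z - s i‖²`
over the convex hull of the centres, and passes to arbitrary families by weak compactness of
closed balls.
-/

open scoped InnerProductSpace Pointwise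

open Set Finset Filter Topology Metric

section

variable {H : Type*} [NormedAddCommGroup H] [InnerProductSpace ℝ H] {ι : Type*}

theorem sum_sum_mul_mul_norm_sub_sq (F : Finset ι) {w : ι → ℝ}
    (hw : ∑ i ∈ F, w i = 1) (a : ι → H) (b : H) :
    ∑ i ∈ F, ∑ j ∈ F, w i * w j * ‖a i - a j‖ ^ 2
      = 2 * ∑ i ∈ F, w i * ‖a i - b‖ ^ 2 - 2 * ‖∑ i ∈ F, w i • a i - b‖ ^ 2 := by
  set p : ι → H := fun i => a i - b
  have hmean : ∑ i ∈ F, w i • a i - b = ∑ i ∈ F, w i • p i := by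
    simp only [p, smul_sub, Finset.sum_sub_distrib, ← Finset.sum_smul, hw, one_smul]
  have hsq : ‖∑ i ∈ F, w i • p i‖ ^ 2 = ∑ i ∈ F, ∑ j ∈ F, w i * w j * ⟪p i, p j⟫_ℝ := by
    simp only [← real_inner_self_eq_norm_sq, sum_inner, inner_sum, real_inner_smul_left,
      real_inner_smul_right, mul_assoc]
    exact Finset.sum_congr rfl fun i _ => Finset.sum_congr rfl fun j _ => by rw [real_inner_comm]
  calc ∑ i ∈ F, ∑ j ∈ F, w i * w j * ‖a i - a j‖ ^ 2
      = ∑ i ∈ F, ∑ j ∈ F, (w j * (w i * ‖p i‖ ^ 2) + w i * (w j * ‖p j‖ ^ 2)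
          - 2 * (w i * w j * ⟪p i, p j⟫_ℝ)) := by
        refine Finset.sum_congr rfl fun i _ => Finset.sum_congr rfl fun j _ => ?_
        rw [show a i - a j = p i - p j by simp [p], norm_sub_sq_real]
        ring
    _ = 2 * ∑ i ∈ F, w i * ‖p i‖ ^ 2 - 2 * ‖∑ i ∈ F, w i • p i‖ ^ 2 := by
        simp only [Finset.sum_sub_distrib, Finset.sum_add_distrib, ← Finset.sum_mul,
          ← Finset.mul_sum, hw, hsq]
        ring
    _ = _ := by rw [hmean]

theorem exists_norm_sub_le_of_mem_convexHull_range {s c : ι → H} {L : ℝ}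
    (hL : 0 ≤ L) (hc : ∀ i j, ‖c i - c j‖ ≤ L * ‖s i - s j‖) (z : H) {v : H}
    (hv : v ∈ convexHull ℝ (range c)) : ∃ i, ‖v - c i‖ ≤ L * ‖z - s i‖ := by
  rw [convexHull_range_eq_exists_affineCombination] at hv
  obtain ⟨F, w, hw0, hw1, rfl⟩ := hv
  rw [F.affineCombination_eq_linear_combination c w hw1]
  by_contra! hfar
  -- By the variance identity, the `w`-mean of `‖c i - v‖²` is half the weighted spread of the
  -- `c i`, which the Lipschitz bound controls by `L²` times the `w`-mean of `‖s i - z‖²`.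
  have hvar := sum_sum_mul_mul_norm_sub_sq F hw1 c (∑ i ∈ F, w i • c i)
  have hvar' := sum_sum_mul_mul_norm_sub_sq F hw1 s z
  have hlip : ∑ i ∈ F, ∑ j ∈ F, w i * w j * ‖c i - c j‖ ^ 2
      ≤ L ^ 2 * ∑ i ∈ F, ∑ j ∈ F, w i * w j * ‖s i - s j‖ ^ 2 := by
    simp only [Finset.mul_sum]
    refine Finset.sum_le_sum fun i hi => Finset.sum_le_sum fun j hj => ?_
    have := pow_le_pow_left₀ (norm_nonneg _) (hc i j) 2
    rw [mul_pow] at this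
    nlinarith [mul_nonneg (hw0 i hi) (hw0 j hj)]
  have hfar' : ∑ i ∈ F, w i * (L ^ 2 * ‖s i - z‖ ^ 2)
      < ∑ i ∈ F, w i * ‖c i - ∑ j ∈ F, w j • c j‖ ^ 2 := by
    obtain ⟨i, hi, hwi⟩ := Finset.exists_ne_zero_of_sum_ne_zero (hw1 ▸ one_ne_zero)
    have hsq : ∀ i, L ^ 2 * ‖s i - z‖ ^ 2 < ‖c i - ∑ j ∈ F, w j • c j‖ ^ 2 := fun i => by
      rw [← mul_pow, norm_sub_rev, norm_sub_rev (c i)]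
      exact pow_lt_pow_left₀ (hfar i) (by positivity) two_ne_zero
    refine Finset.sum_lt_sum (fun i hi => mul_le_mul_of_nonneg_left (hsq i).le (hw0 i hi))
      ⟨i, hi, mul_lt_mul_of_pos_left (hsq i) (lt_of_le_of_ne (hw0 i hi) hwi.symm)⟩
  simp only [sub_self, norm_zero] at hvar
  simp only [mul_left_comm _ (L ^ 2), ← Finset.mul_sum] at hfar'
  nlinarith [sq_nonneg L, sq_nonneg ‖∑ i ∈ F, w i • s i - z‖]

theorem norm_add_smul_sub_sq (v u c : H) (t : ℝ) :
    ‖v + t • u - c‖ ^ 2 = ‖v - c‖ ^ 2 - 2 * t * ⟪u, c - v⟫_ℝ + t ^ 2 * ‖u‖ ^ 2 := by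
  rw [show v + t • u - c = t • u - (c - v) by abel, norm_sub_sq_real, norm_smul,
    real_inner_smul_left, mul_pow, Real.norm_eq_abs, sq_abs, norm_sub_rev]
  ring

theorem mem_convexHull_activeCenters_of_minimax [Finite ι] {c : ι → H} {ρ : ι → ℝ}
    {K : Set H} (hK : Convex ℝ K) (hcK : ∀ i, c i ∈ K) {v₀ : H} (hv₀ : v₀ ∈ K) {μ : ℝ}
    (hμ : ∀ i, ‖v₀ - c i‖ ^ 2 - ρ i ≤ μ) (hmin : ∀ v ∈ K, ∃ i, μ ≤ ‖v - c i‖ ^ 2 - ρ i) :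
    v₀ ∈ convexHull ℝ (c '' {i | ‖v₀ - c i‖ ^ 2 - ρ i = μ}) := by
  set C := convexHull ℝ (c '' {i | ‖v₀ - c i‖ ^ 2 - ρ i = μ})
  -- Moving from `v₀` towards its projection onto `C` lowers every active term at first order
  -- and, by continuity, keeps the inactive ones below `μ`.
  by_contra hv₀C
  have hCne : C.Nonempty := by
    obtain ⟨i, hi⟩ := hmin v₀ hv₀
    exact ⟨c i, subset_convexHull ℝ _ ⟨i, le_antisymm (hμ i) hi, rfl⟩⟩
  have hCcpt : IsCompact C := ((toFinite _).image c).isCompact_convexHull ℝ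
  obtain ⟨P, hPC, hP⟩ := exists_norm_eq_iInf_of_complete_convex hCne hCcpt.isComplete
    (convex_convexHull ℝ _) v₀
  have hproj := (norm_eq_iInf_iff_real_inner_le_zero (convex_convexHull ℝ _) hPC).1 hP
  set u := P - v₀ with hu_def
  have hu : 0 < ‖u‖ ^ 2 := by
    have : u ≠ 0 := sub_ne_zero.2 fun h => hv₀C (h ▸ hPC)
    positivity
  have hactive : ∀ i, ‖v₀ - c i‖ ^ 2 - ρ i = μ → ‖u‖ ^ 2 ≤ ⟪u, c i - v₀⟫_ℝ := fun i hi => by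
    have hPi := hproj (c i) (subset_convexHull ℝ _ ⟨i, hi, rfl⟩)
    have : ⟪u, c i - v₀⟫_ℝ = ‖u‖ ^ 2 - ⟪v₀ - P, c i - P⟫_ℝ := by
      rw [hu_def, ← real_inner_self_eq_norm_sq, ← neg_sub P v₀, inner_neg_left, sub_neg_eq_add,
        ← inner_add_right]
      congr 1
      abel
    linarith
  have hdecrease : ∀ i, ∀ᶠ t in 𝓝[>] (0 : ℝ), ‖v₀ + t • u - c i‖ ^ 2 - ρ i < μ := fun i => by
    by_cases hi : ‖v₀ - c i‖ ^ 2 - ρ i = μ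
    · filter_upwards [Ioo_mem_nhdsGT one_pos] with t ⟨ht0, ht1⟩
      rw [norm_add_smul_sub_sq]
      nlinarith [hactive i hi, mul_pos ht0 hu]
    · have hcont : Continuous fun t : ℝ => ‖v₀ + t • u - c i‖ ^ 2 - ρ i := by fun_prop
      refine Tendsto.eventually_lt_const (lt_of_le_of_ne (hμ i) hi) ?_
      simpa using (hcont.tendsto 0).mono_left nhdsWithin_le_nhds
  obtain ⟨t, hlt, ht0, ht1⟩ :=
    ((eventually_all.2 hdecrease).and (Ioo_mem_nhdsGT one_pos)).exists
  have hPK : P ∈ K := convexHull_min (image_subset_iff.2 fun i _ => hcK i) hK hPC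
  obtain ⟨i, hi⟩ := hmin _ (hK.add_smul_sub_mem hv₀ hPK ⟨ht0.le, ht1.le⟩)
  exact (hlt i).not_ge hi

theorem exists_norm_sub_le_mul_norm_sub_of_finite [Finite ι] {s c : ι → H} {L : ℝ}
    (hL : 0 ≤ L) (hc : ∀ i j, ‖c i - c j‖ ≤ L * ‖s i - s j‖) (z : H) :
    ∃ v, ∀ i, ‖v - c i‖ ≤ L * ‖z - s i‖ := by
  rcases isEmpty_or_nonempty ι with _ | _
  · exact ⟨0, isEmptyElim⟩
  have := Fintype.ofFinite ι
  set φ : ι → H → ℝ := fun i v => ‖v - c i‖ ^ 2 - (L * ‖z - s i‖) ^ 2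
  set K := convexHull ℝ (range c)
  have hKcpt : IsCompact K := (finite_range c).isCompact_convexHull ℝ
  have hKne : K.Nonempty := (range_nonempty c).convexHull
  obtain ⟨v₀, hv₀, hmin⟩ := hKcpt.exists_isMinOn hKne
    (f := fun v => univ.sup' univ_nonempty (φ · v)) (by fun_prop)
  set μ := univ.sup' univ_nonempty (φ · v₀)
  have hμ : ∀ i, φ i v₀ ≤ μ := fun i => le_sup' (φ · v₀) (mem_univ i)
  have hactive := mem_convexHull_activeCenters_of_minimax (convex_convexHull ℝ _)
    (fun i => subset_convexHull ℝ _ (mem_range_self i)) hv₀ hμ fun v hv => by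
      obtain ⟨i, -, hi⟩ := exists_mem_eq_sup' univ_nonempty (φ · v)
      exact ⟨i, le_of_le_of_eq (hmin hv) hi⟩
  rw [image_eq_range] at hactive
  obtain ⟨⟨i, hi⟩, hle⟩ := exists_norm_sub_le_of_mem_convexHull_range
    (ι := {i | φ i v₀ = μ}) (s := fun i => s i) hL (fun i j => hc i j) z hactive
  have hμ0 : μ ≤ 0 := by
    rw [← (hi : φ i v₀ = μ), sub_nonpos]
    exact pow_le_pow_left₀ (norm_nonneg _) hle 2
  refine ⟨v₀, fun j => ?_⟩
  have := (hμ j).trans hμ0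
  rw [sub_nonpos] at this
  exact (pow_le_pow_iff_left₀ (norm_nonneg _) (by positivity) two_ne_zero).1 this

theorem inclusionInDoubleDual_surjective [CompleteSpace H] :
    Function.Surjective (NormedSpace.inclusionInDoubleDual ℝ H) := by
  intro φ
  let ψ : StrongDual ℝ H :=
    { toFun := fun x => φ (InnerProductSpace.toDual ℝ H x)
      map_add' := by simp
      map_smul' := by simp
      cont := by fun_prop }
  refine ⟨(InnerProductSpace.toDual ℝ H).symm ψ, ?_⟩
  ext f
  obtain ⟨x, rfl⟩ := (InnerProductSpace.toDual ℝ H).surjective f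
  simp only [NormedSpace.dual_def, InnerProductSpace.toDual_apply_apply]
  rw [real_inner_comm, InnerProductSpace.toDual_symm_apply]
  rfl

theorem isClosed_toWeakSpace_closedBall (x : H) (r : ℝ) :
    IsClosed (toWeakSpace ℝ H '' closedBall x r) := by
  rw [← isClosed_closedBall.closure_eq, (convex_closedBall x r).toWeakSpace_closure ℝ]
  exact isClosed_closure

theorem isCompact_toWeakSpace_closedBall [CompleteSpace H] (x : H) (r : ℝ) :
    IsCompact (toWeakSpace ℝ H '' closedBall x r) := by
  rw [← isClosed_closedBall.closure_eq, (convex_closedBall x r).toWeakSpace_closure ℝ]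
  refine NormedSpace.isCompact_closure_of_isBounded ℝ H _ ?_ fun φ _ => ?_
  · rw [(toWeakSpace ℝ H).injective.preimage_image]
    exact isBounded_closedBall
  · obtain ⟨y, hy⟩ := inclusionInDoubleDual_surjective (H := H) (WeakDual.toStrongDual φ)
    exact ⟨toWeakSpace ℝ H y, congrArg StrongDual.toWeakDual hy⟩

theorem exists_forall_mem_closedBall_of_forall_finset [CompleteSpace H]
    (c : ι → H) (r : ι → ℝ) (h : ∀ F : Finset ι, ∃ v, ∀ i ∈ F, v ∈ closedBall (c i) (r i)) :
    ∃ v, ∀ i, v ∈ closedBall (c i) (r i) := by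
  classical
  rcases isEmpty_or_nonempty ι with _ | ⟨⟨i₀⟩⟩
  · exact ⟨0, isEmptyElim⟩
  set e := toWeakSpace ℝ H
  obtain ⟨v, -, hv⟩ :=
    (isCompact_toWeakSpace_closedBall (c i₀) (r i₀)).inter_iInter_nonempty
      (fun i => e '' closedBall (c i) (r i)) (fun i => isClosed_toWeakSpace_closedBall _ _)
      fun F => by
        obtain ⟨v, hv⟩ := h (insert i₀ F)
        exact ⟨e v, mem_image_of_mem _ (hv _ (mem_insert_self _ _)),
          mem_iInter₂.2 fun i hi => mem_image_of_mem _ (hv i (mem_insert_of_mem hi))⟩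
  refine ⟨e.symm v, fun i => ?_⟩
  obtain ⟨y, hy, rfl⟩ := mem_iInter.1 hv i
  simpa using hy

theorem exists_norm_sub_le_mul_norm_sub [CompleteSpace H] {s c : ι → H} {L : ℝ}
    (hL : 0 ≤ L) (hc : ∀ i j, ‖c i - c j‖ ≤ L * ‖s i - s j‖) (z : H) :
    ∃ v, ∀ i, ‖v - c i‖ ≤ L * ‖z - s i‖ := by
  simp only [← dist_eq_norm, ← mem_closedBall]
  refine exists_forall_mem_closedBall_of_forall_finset c _ fun F => ?_
  obtain ⟨v, hv⟩ := exists_norm_sub_le_mul_norm_sub_of_finite (ι := F) (s := fun i => s i)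
    (c := fun i => c i) hL (fun i j => hc i j) z
  exact ⟨v, fun i hi => by simpa [dist_eq_norm] using hv ⟨i, hi⟩⟩

theorem norm_sub_smul_le_iff_mul_norm_sq_le_inner {β : ℝ} (hβ : 0 < β) (a b : H) :
    ‖a - (2 * β)⁻¹ • b‖ ≤ (2 * β)⁻¹ * ‖b‖ ↔ β * ‖a‖ ^ 2 ≤ ⟪a, b⟫_ℝ := by
  rw [← pow_le_pow_iff_left₀ (norm_nonneg _) (by positivity) two_ne_zero, norm_sub_sq_real,
    norm_smul, real_inner_smul_right, mul_pow, Real.norm_of_nonneg (by positivity)]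
  constructor <;> intro h
  · have := mul_le_mul_of_nonneg_left h hβ.le
    field_simp at this
    nlinarith
  · field_simp
    nlinarith

def IsComonotone (α : ℝ) (A : H → Set H) : Prop :=
  ∀ x u y v, u ∈ A x → v ∈ A y → ⟪x - y, u - v⟫_ℝ ≥ α * ‖u - v‖ ^ 2

variable {α γ : ℝ} {A : H → Set H}

theorem IsComonotone.mul_norm_sq_le_inner (hA : IsComonotone α A) {x u y v : H}
    (hu : u ∈ A x) (hv : v ∈ A y) :
    (γ + α) * ‖u - v‖ ^ 2 ≤ ⟪(x + γ • u) - (y + γ • v), u - v⟫_ℝ := by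
  rw [show x + γ • u - (y + γ • v) = (x - y) + γ • (u - v) by rw [smul_sub]; abel,
    inner_add_left, real_inner_smul_left, real_inner_self_eq_norm_sq]
  linarith [hA x u y v hu hv]

theorem IsComonotone.eq_of_add_smul_eq (hA : IsComonotone α A) (hγα : 0 < γ + α)
    {x u y v : H} (hu : u ∈ A x) (hv : v ∈ A y) (h : x + γ • u = y + γ • v) : x = y ∧ u = v := by
  have hle := hA.mul_norm_sq_le_inner (γ := γ) hu hv
  rw [h, sub_self, inner_zero_left] at hle
  have huv : u = v := by
    have : ‖u - v‖ ^ 2 = 0 := le_antisymm (by nlinarith [sq_nonneg ‖u - v‖]) (sq_nonneg _)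
    simpa [sub_eq_zero] using this
  subst huv
  exact ⟨add_right_cancel h, rfl⟩

theorem IsComonotone.union_singleton (hA : IsComonotone α A) {p q : H}
    (hpq : ∀ y v, v ∈ A y → ⟪p - y, q - v⟫_ℝ ≥ α * ‖q - v‖ ^ 2) :
    IsComonotone α fun x => A x ∪ {u | x = p ∧ u = q} := by
  rintro x u y v (hu | ⟨hx, hu⟩) (hv | ⟨hy, hv⟩)
  · exact hA x u y v hu hv
  · rw [hy, hv, ← neg_sub p x, ← neg_sub q u, inner_neg_neg, norm_neg]
    exact hpq x u hu
  · rw [hx, hu]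
    exact hpq y v hv
  · simp [hx, hu, hy, hv]

theorem IsComonotone.exists_related [CompleteSpace H] (hA : IsComonotone α A)
    (hγα : 0 < γ + α) (z : H) :
    ∃ w, ∀ y v, v ∈ A y → ⟪(z - γ • w) - y, w - v⟫_ℝ ≥ α * ‖w - v‖ ^ 2 := by
  set L := (2 * (γ + α))⁻¹ with hL
  let s : {p : H × H // p.2 ∈ A p.1} → H := fun p => p.1.1 + γ • p.1.2
  obtain ⟨w, hw⟩ := exists_norm_sub_le_mul_norm_sub (s := s) (L := L)
    (c := fun p => p.1.2 + L • (z - s p)) (by positivity) (fun p q => by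
      rw [show p.1.2 + L • (z - s p) - (q.1.2 + L • (z - s q))
          = (p.1.2 - q.1.2) - L • (s p - s q) by module,
        hL, norm_sub_smul_le_iff_mul_norm_sq_le_inner hγα, real_inner_comm]
      exact hA.mul_norm_sq_le_inner p.2 q.2) z
  refine ⟨w, fun y v hv => ?_⟩
  have hball := hw ⟨(y, v), hv⟩
  rw [sub_add_eq_sub_sub, hL, norm_sub_smul_le_iff_mul_norm_sq_le_inner hγα, real_inner_comm]
    at hball
  rw [show z - γ • w - y = (z - (y + γ • v)) - γ • (w - v) by rw [smul_sub]; abel,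
    inner_sub_left, real_inner_smul_left, real_inner_self_eq_norm_sq]
  linarith

end

theorem resolvent_fullDomain_iff_maximallyComonotone_general {H : Type*} [NormedAddCommGroup H]
    [InnerProductSpace ℝ H] [CompleteSpace H] (A : H → Set H) (α γ : ℝ)
    (hγα : 0 < γ + α)
    (hA : ∀ x u y v, u ∈ A x → v ∈ A y → ⟪x - y, u - v⟫_ℝ ≥ α * ‖u - v‖ ^ 2) :
    (∀ z : H, ∃ x : H, z - x ∈ γ • A x) ↔
    (∀ A' : H → Set H,
      (∀ x u y v, u ∈ A' x → v ∈ A' y → ⟪x - y, u - v⟫_ℝ ≥ α * ‖u - v‖ ^ 2) →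
      (∀ x, A x ⊆ A' x) → ∀ x, A' x = A x) := by
  constructor
  · intro hdom A' hA' hAA' x
    refine Subset.antisymm (fun u hu => ?_) (hAA' x)
    obtain ⟨y, hy⟩ := hdom (x + γ • u)
    obtain ⟨v, hv, hvu⟩ := mem_smul_set.1 hy
    obtain ⟨rfl, rfl⟩ := IsComonotone.eq_of_add_smul_eq hA' hγα hu (hAA' y hv)
      (by rw [hvu]; abel)
    exact hv
  · intro hmax z
    obtain ⟨w, hw⟩ := IsComonotone.exists_related hA hγα z
    have hext := hmax _ (IsComonotone.union_singleton hA hw) (fun x => subset_union_left)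
      (z - γ • w)
    refine ⟨z - γ • w, ?_⟩
    rw [sub_sub_cancel]
    exact smul_mem_smul_set (hext ▸ Or.inr ⟨rfl, rfl⟩)

/-- For an `α`-comonotone operator `A` and `γ > 0` with `γ + α > 0`, the resolvent
`J_{γA} = (Id + γA)⁻¹` has full domain iff `A` is maximally `α`-comonotone. -/
theorem resolvent_fullDomain_iff_maximallyComonotone {H : Type*} [NormedAddCommGroup H]
    [InnerProductSpace ℝ H] [CompleteSpace H] (A : H → Set H) (α γ : ℝ)
    (hγ : 0 < γ) (hγα : 0 < γ + α)
    (hA : ∀ x u y v, u ∈ A x → v ∈ A y → ⟪x - y, u - v⟫_ℝ ≥ α * ‖u - v‖ ^ 2) :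
    (∀ z : H, ∃ x : H, z - x ∈ γ • A x) ↔
    (∀ A' : H → Set H,
      (∀ x u y v, u ∈ A' x → v ∈ A' y → ⟪x - y, u - v⟫_ℝ ≥ α * ‖u - v‖ ^ 2) →
      (∀ x, A x ⊆ A' x) → ∀ x, A' x = A x) :=
  resolvent_fullDomain_iff_maximallyComonotone_general A α γ hγα hA
end

section
/- Let H be a real Hilbert space and let n ≥ 2. For each i ∈ {1,…,n}, let F_i : H → H be firmly nonexpansive and let (x_{i,k})_k be a sequence in H. Suppose that: (a) for each i, x_{i,k} ⇀ x_i; (b) for each i, F_i(x_{i,k}) ⇀ y; (c) Σ_{i=1}^n (x_{i,k} − F_i(x_{i,k})) → −ny + Σ_{i=1}^n x_i strongly; (d) for all i, j, F_i(x_{i,k}) − F_j(x_{j,k}) → 0 strongly. Then F₁(x₁) = F₂(x₂) = ⋯ = F_n(x_n) = y. -/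
open scoped InnerProductSpace
open Filter Finset

private lemma weak_bdd {H : Type*} [NormedAddCommGroup H] [InnerProductSpace ℝ H]
    [CompleteSpace H] (v : ℕ → H) (vl : H)
    (h : ∀ u : H, Tendsto (fun k => ⟪v k, u⟫_ℝ) atTop (nhds ⟪vl, u⟫_ℝ)) :
    ∃ C, ∀ k, ‖v k‖ ≤ C := by
  have hpt : ∀ u : H, ∃ C, ∀ k, ‖(innerSL ℝ (v k)) u‖ ≤ C := by
    intro u
    obtain ⟨C, hC⟩ := ((h u).norm).bddAbove_range
    exact ⟨C, fun k => hC ⟨k, rfl⟩⟩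
  obtain ⟨C, hC⟩ := banach_steinhaus hpt
  exact ⟨C, fun k => by simpa [innerSL_apply_norm] using hC k⟩

/-- strong × (bounded) weak convergence of inner products; the weakly convergent
sequence is in the FIRST slot. -/
private lemma inner_tendsto_sw {H : Type*} [NormedAddCommGroup H]
    [InnerProductSpace ℝ H] {u : ℕ → H} {ul : H} {v : ℕ → H} {vl : H} {C : ℝ}
    (hu : Tendsto u atTop (nhds ul))
    (hv : ∀ w : H, Tendsto (fun k => ⟪v k, w⟫_ℝ) atTop (nhds ⟪vl, w⟫_ℝ))
    (hC : ∀ k, ‖v k‖ ≤ C) :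
    Tendsto (fun k => ⟪v k, u k⟫_ℝ) atTop (nhds ⟪vl, ul⟫_ℝ) := by
  have h1 : Tendsto (fun k => ⟪v k, u k - ul⟫_ℝ) atTop (nhds 0) := by
    have hb : ∀ k, ‖⟪v k, u k - ul⟫_ℝ‖ ≤ ‖u k - ul‖ * C := by
      intro k
      refine (norm_inner_le_norm _ _).trans ?_
      have h0 : (0:ℝ) ≤ ‖u k - ul‖ := norm_nonneg _
      nlinarith [hC k, norm_nonneg (v k)]
    have h2 : Tendsto (fun k => ‖u k - ul‖ * C) atTop (nhds 0) := by
      have := (tendsto_sub_nhds_zero_iff.mpr hu).norm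
      simpa using this.mul_const C
    exact squeeze_zero_norm hb h2
  have h3 := h1.add (hv ul)
  rw [zero_add] at h3
  refine h3.congr fun k => ?_
  rw [inner_sub_right]; ring

/-- Demiclosedness principle for firmly nonexpansive operators. -/
theorem demiclosedness_firmly_nonexpansive {H : Type*} [NormedAddCommGroup H]
    [InnerProductSpace ℝ H] [CompleteSpace H] (n : ℕ) (hn : 2 ≤ n)
    (F : Fin n → H → H)
    (hF : ∀ i, ∀ x y : H, ⟪x - y, F i x - F i y⟫_ℝ ≥ ‖F i x - F i y‖ ^ 2)
    (x : Fin n → ℕ → H) (xl : Fin n → H) (y : H)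
    (ha : ∀ i, ∀ u : H,
      Filter.Tendsto (fun k => ⟪x i k, u⟫_ℝ) Filter.atTop (nhds ⟪xl i, u⟫_ℝ))
    (hb : ∀ i, ∀ u : H,
      Filter.Tendsto (fun k => ⟪F i (x i k), u⟫_ℝ) Filter.atTop (nhds ⟪y, u⟫_ℝ))
    (hc : Filter.Tendsto (fun k => ∑ i, (x i k - F i (x i k)))
      Filter.atTop (nhds ((-(n : ℝ)) • y + ∑ i, xl i)))
    (hd : ∀ i j, Filter.Tendsto (fun k => F i (x i k) - F j (x j k))
      Filter.atTop (nhds 0)) :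
    ∀ i, F i (xl i) = y := by
  have hn0 : 0 < n := by omega
  set i0 : Fin n := ⟨0, hn0⟩
  -- notation
  set z : Fin n → H := fun i => F i (xl i) with hzdef
  -- boundedness of the weakly convergent sequences
  choose Cx hCx using fun i => weak_bdd (x i) (xl i) (ha i)
  choose Cb hCb using fun i => weak_bdd (fun k => F i (x i k)) y (hb i)
  -- residuals converge weakly
  have hr : ∀ i, ∀ w : H, Tendsto (fun k => ⟪x i k - F i (x i k), w⟫_ℝ) atTop
      (nhds ⟪xl i - y, w⟫_ℝ) := by
    intro i w
    have := (ha i w).sub (hb i w)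
    simpa [inner_sub_left] using this
  have hrC : ∀ i k, ‖x i k - F i (x i k)‖ ≤ Cx i + Cb i := by
    intro i k
    calc ‖x i k - F i (x i k)‖ ≤ ‖x i k‖ + ‖F i (x i k)‖ := norm_sub_le _ _
    _ ≤ Cx i + Cb i := add_le_add (hCx i k) (hCb i k)
  -- the key nonnegative sequence
  set S : ℕ → ℝ := fun k => ∑ i,
    ⟪(x i k - F i (x i k)) - (xl i - z i), F i (x i k) - z i⟫_ℝ with hSdef
  have hpos : ∀ k, 0 ≤ S k := by
    intro k
    apply Finset.sum_nonneg
    intro i _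
    have h := hF i (x i k) (xl i)
    have key : (x i k - F i (x i k)) - (xl i - z i)
        = (x i k - xl i) - (F i (x i k) - z i) := by
      simp only [hzdef]; abel
    have hz' : z i = F i (xl i) := rfl
    rw [key, inner_sub_left, hz', real_inner_self_eq_norm_sq]
    linarith [h]
  -- decomposition of S
  have hdecomp : ∀ k, S k
      = ⟪F i0 (x i0 k), ∑ i, (x i k - F i (x i k))⟫_ℝ
      + (∑ i, ⟪x i k - F i (x i k), F i (x i k) - F i0 (x i0 k)⟫_ℝ)
      + (∑ i, (-⟪x i k - F i (x i k), z i⟫_ℝ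
          - ⟪F i (x i k), xl i - z i⟫_ℝ + ⟪xl i - z i, z i⟫_ℝ)) := by
    intro k
    rw [inner_sum]
    rw [← Finset.sum_add_distrib, ← Finset.sum_add_distrib]
    apply Finset.sum_congr rfl
    intro i _
    simp only [inner_sub_left, inner_sub_right]
    rw [real_inner_comm (F i0 (x i0 k)) (x i k),
        real_inner_comm (F i0 (x i0 k)) (F i (x i k)),
        real_inner_comm (F i (x i k)) (xl i),
        real_inner_comm (F i (x i k)) (z i)]
    ring
  -- limits of the three pieces
  have hT1 : Tendsto (fun k => ⟪F i0 (x i0 k), ∑ i, (x i k - F i (x i k))⟫_ℝ)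
      atTop (nhds ⟪y, (-(n : ℝ)) • y + ∑ i, xl i⟫_ℝ) :=
    inner_tendsto_sw hc (hb i0) (hCb i0)
  have hT2 : Tendsto (fun k =>
      ∑ i, ⟪x i k - F i (x i k), F i (x i k) - F i0 (x i0 k)⟫_ℝ) atTop (nhds 0) := by
    have : Tendsto (fun k =>
        ∑ i, ⟪x i k - F i (x i k), F i (x i k) - F i0 (x i0 k)⟫_ℝ) atTop
        (nhds (∑ i : Fin n, ⟪xl i - y, (0:H)⟫_ℝ)) := by
      apply tendsto_finset_sum
      intro i _
      exact inner_tendsto_sw (hd i i0) (hr i) (hrC i)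
    simpa using this
  have hT3 : Tendsto (fun k => ∑ i, (-⟪x i k - F i (x i k), z i⟫_ℝ
      - ⟪F i (x i k), xl i - z i⟫_ℝ + ⟪xl i - z i, z i⟫_ℝ)) atTop
      (nhds (∑ i, (-⟪xl i - y, z i⟫_ℝ - ⟪y, xl i - z i⟫_ℝ + ⟪xl i - z i, z i⟫_ℝ))) := by
    apply tendsto_finset_sum
    intro i _
    exact (((hr i (z i)).neg).sub (hb i (xl i - z i))).add tendsto_const_nhds
  have hlim : Tendsto S atTop (nhds (∑ i, -(‖y - z i‖ ^ 2))) := by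
    have hsum := (hT1.add hT2).add hT3
    rw [add_zero] at hsum
    have hval : ⟪y, (-(n : ℝ)) • y + ∑ i, xl i⟫_ℝ
        + (∑ i, (-⟪xl i - y, z i⟫_ℝ - ⟪y, xl i - z i⟫_ℝ + ⟪xl i - z i, z i⟫_ℝ))
        = ∑ i, -(‖y - z i‖ ^ 2) := by
      have hcard : -(n : ℝ) * ‖y‖ ^ 2 = ∑ _i : Fin n, -(‖y‖ ^ 2) := by
        rw [Finset.sum_const, Finset.card_univ, Fintype.card_fin]
        ring
      rw [inner_add_right, real_inner_smul_right, real_inner_self_eq_norm_sq,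
        inner_sum, hcard, ← Finset.sum_add_distrib, ← Finset.sum_add_distrib]
      apply Finset.sum_congr rfl
      intro i _
      rw [norm_sub_sq_real]
      simp only [inner_sub_left, inner_sub_right, real_inner_self_eq_norm_sq]
      ring
    rw [← hval]
    exact hsum.congr fun k => (hdecomp k).symm
  -- conclude
  have hle : 0 ≤ ∑ i, -(‖y - z i‖ ^ 2) := ge_of_tendsto' hlim hpos
  have hsum0 : ∑ i, ‖y - z i‖ ^ 2 = 0 := by
    have h1 : ∑ i, ‖y - z i‖ ^ 2 ≤ 0 := by
      have : ∑ i, -(‖y - z i‖ ^ 2) = -(∑ i, ‖y - z i‖ ^ 2) := by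
        rw [Finset.sum_neg_distrib]
      linarith [hle, this]
    have h2 : 0 ≤ ∑ i, ‖y - z i‖ ^ 2 :=
      Finset.sum_nonneg fun i _ => sq_nonneg _
    linarith
  intro i
  have hi : ‖y - z i‖ ^ 2 = 0 := by
    have := (Finset.sum_eq_zero_iff_of_nonneg (fun i _ => sq_nonneg (‖y - z i‖))).mp
      hsum0 i (Finset.mem_univ i)
    exact this
  have : y - z i = 0 := by
    have := pow_eq_zero_iff (n := 2) (by norm_num) |>.mp hi
    exact norm_eq_zero.mp this
  have : z i = y := by
    have h := sub_eq_zero.mp this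
    exact h.symm
  exact this
end

section
/- Let H be a real Hilbert space and let n ≥ 2. For each i ∈ {1,…,n}, let T_i : H → H be conically θ_i-averaged (θ_i > 0) and let (x_{i,k})_k be a sequence in H. Suppose that: (a) for each i, x_{i,k} ⇀ x_i; (b) for each i, T_i(x_{i,k}) ⇀ 2θ_i y + (1 − 2θ_i)x_i; (c) Σ_{i=1}^n (x_{i,k} − T_i(x_{i,k}))/(2θ_i) → −ny + Σ_{i=1}^n x_i strongly; (d) for all i, j, (x_{i,k} − x_{j,k}) − ((x_{i,k} − T_i(x_{i,k}))/(2θ_i) − (x_{j,k} − T_j(x_{j,k}))/(2θ_j)) → 0 strongly. Then T_i(x_i) = 2θ_i y + (1 − 2θ_i)x_i for every i ∈ {1,…,n}. -/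
/-!
Put `A i = (2θᵢ)⁻¹ • (Id - T i) = 2⁻¹ • (Id - R i)`; each `A i` is firmly nonexpansive. Apply
firm nonexpansiveness of `A i` to `x i k` and `xl i`, and sum over `i`. With
`u i k = x i k - A i (x i k)` and `v i = xl i - A i (xl i)`, split the second factor
`u i k - v i` as `(u i k - u i₀ k) + (u i₀ k - y) + (y - v i)`: each resulting inner product pairs
a weakly convergent sequence with a strongly convergent one (hypotheses (c) and (d) provide the
strong ones), so the nonnegative sum tends to `-∑ i, ‖v i - y‖²`. Hence `v i = y` for all `i`,
which is the claim.
-/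

open scoped InnerProductSpace
open Filter Topology

section

variable {H : Type*} [NormedAddCommGroup H] [InnerProductSpace ℝ H]

def WeakTendsto (z : ℕ → H) (a : H) : Prop :=
  ∀ u : H, Tendsto (fun k => ⟪z k, u⟫_ℝ) atTop (𝓝 ⟪a, u⟫_ℝ)

namespace WeakTendsto

variable {z w : ℕ → H} {a b : H}

theorem const (a : H) : WeakTendsto (fun _ => a) a := fun _ => tendsto_const_nhds

theorem sub (hz : WeakTendsto z a) (hw : WeakTendsto w b) :
    WeakTendsto (fun k => z k - w k) (a - b) := fun u => by
  simpa only [inner_sub_left] using (hz u).sub (hw u)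

theorem const_smul (hz : WeakTendsto z a) (c : ℝ) :
    WeakTendsto (fun k => c • z k) (c • a) := fun u => by
  simpa only [real_inner_smul_left] using (hz u).const_mul c

theorem isBoundedUnder_norm [CompleteSpace H] (hz : WeakTendsto z a) :
    IsBoundedUnder (· ≤ ·) atTop (norm ∘ z) := by
  obtain ⟨C, hC⟩ := banach_steinhaus (g := fun k => innerSL ℝ (z k)) fun u => by
    obtain ⟨C, hC⟩ := (hz u).norm.bddAbove_range
    exact ⟨C, fun k => by simpa using hC (Set.mem_range_self k)⟩
  exact isBoundedUnder_of ⟨C, fun k => by simpa [innerSL_apply_norm] using hC k⟩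

theorem tendsto_inner [CompleteSpace H] (hz : WeakTendsto z a) (hw : Tendsto w atTop (𝓝 b)) :
    Tendsto (fun k => ⟪z k, w k⟫_ℝ) atTop (𝓝 ⟪a, b⟫_ℝ) := by
  have hsmall : Tendsto (fun k => ⟪z k, w k - b⟫_ℝ) atTop (𝓝 0) :=
    (tendsto_sub_nhds_zero_iff.2 hw).op_zero_isBoundedUnder_le hz.isBoundedUnder_norm
      (fun v u => ⟪u, v⟫_ℝ) fun v u => (norm_inner_le_norm u v).trans_eq (mul_comm _ _)
  simpa only [inner_sub_right, sub_add_cancel, zero_add] using hsmall.add (hz b)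

end WeakTendsto

/-- The usual `‖A a - A b‖² ≤ ⟪A a - A b, a - b⟫`, rearranged. -/
def IsFirmlyNonexpansive (A : H → H) : Prop :=
  ∀ a b, 0 ≤ ⟪A a - A b, (a - A a) - (b - A b)⟫_ℝ

theorem isFirmlyNonexpansive_half_sub {R : H → H} (hR : ∀ a b, ‖R a - R b‖ ≤ ‖a - b‖) :
    IsFirmlyNonexpansive fun z => (2 : ℝ)⁻¹ • (z - R z) := by
  intro a b
  have key : ⟪(2 : ℝ)⁻¹ • (a - R a) - (2 : ℝ)⁻¹ • (b - R b),
      (a - (2 : ℝ)⁻¹ • (a - R a)) - (b - (2 : ℝ)⁻¹ • (b - R b))⟫_ℝ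
      = (‖a - b‖ ^ 2 - ‖R a - R b‖ ^ 2) / 4 := by
    rw [show (2 : ℝ)⁻¹ • (a - R a) - (2 : ℝ)⁻¹ • (b - R b)
        = (2 : ℝ)⁻¹ • ((a - b) - (R a - R b)) by module,
      show (a - (2 : ℝ)⁻¹ • (a - R a)) - (b - (2 : ℝ)⁻¹ • (b - R b))
        = (2 : ℝ)⁻¹ • ((a - b) + (R a - R b)) by module,
      real_inner_smul_left, real_inner_smul_right, inner_sub_left, inner_add_right,
      inner_add_right, real_inner_self_eq_norm_sq, real_inner_self_eq_norm_sq,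
      real_inner_comm (a - b)]
    ring
  simp only [key]
  have := pow_le_pow_left₀ (norm_nonneg _) (hR a b) 2
  linarith

def IsConicallyAveraged (θ : ℝ) (T : H → H) : Prop :=
  ∃ R : H → H, (∀ a b, ‖R a - R b‖ ≤ ‖a - b‖) ∧ ∀ a, T a = (1 - θ) • a + θ • R a

theorem IsConicallyAveraged.isFirmlyNonexpansive {θ : ℝ} {T : H → H}
    (hT : IsConicallyAveraged θ T) (hθ : θ ≠ 0) :
    IsFirmlyNonexpansive fun z => (2 * θ)⁻¹ • (z - T z) := by
  obtain ⟨R, hR, hTR⟩ := hT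
  convert isFirmlyNonexpansive_half_sub hR using 2 with z
  rw [hTR]
  match_scalars <;> field_simp
  ring

theorem inv_smul_sub_eq_sub_iff {c : ℝ} (hc : c ≠ 0) {a b y : H} :
    c⁻¹ • (a - b) = a - y ↔ b = c • y + (1 - c) • a := by
  rw [inv_smul_eq_iff₀ hc]
  constructor <;> intro h
  · rw [← sub_sub_cancel a b, h]; module
  · rw [h]; module

theorem IsFirmlyNonexpansive.apply_eq_sub_of_weakTendsto [CompleteSpace H] {ι : Type*}
    [Fintype ι] {A : ι → H → H} (hA : ∀ i, IsFirmlyNonexpansive (A i)) {x : ι → ℕ → H}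
    {a : ι → H} {y : H} (hx : ∀ i, WeakTendsto (x i) (a i))
    (hAx : ∀ i, WeakTendsto (fun k => A i (x i k)) (a i - y))
    (hsum : Tendsto (fun k => ∑ i, A i (x i k)) atTop (𝓝 (∑ i, (a i - y))))
    (hdiff : ∀ i j,
      Tendsto (fun k => (x i k - A i (x i k)) - (x j k - A j (x j k))) atTop (𝓝 0))
    (i : ι) : A i (a i) = a i - y := by
  set F : ι → ℕ → H := fun j k => A j (x j k)
  set u : ι → ℕ → H := fun j k => x j k - A j (x j k)
  set q : ι → H := fun j => A j (a j)
  set v : ι → H := fun j => a j - A j (a j)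
  have hdecomp : ∀ k, ∑ j, ⟪F j k - q j, u j k - v j⟫_ℝ = ∑ j, ⟪F j k - q j, u j k - u i k⟫_ℝ
      + ⟪u i k - y, ∑ j, (F j k - q j)⟫_ℝ + ∑ j, ⟪F j k - q j, y - v j⟫_ℝ := by
    intro k
    rw [real_inner_comm, sum_inner, ← Finset.sum_add_distrib, ← Finset.sum_add_distrib]
    refine Finset.sum_congr rfl fun j _ => ?_
    rw [← inner_add_right, ← inner_add_right]
    congr 1
    abel
  have hFq : ∀ j, WeakTendsto (fun k => F j k - q j) (v j - y) := fun j => by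
    have := (hAx j).sub (.const (q j))
    rwa [sub_right_comm] at this
  have hui : WeakTendsto (fun k => u i k - y) (a i - (a i - y) - y) :=
    ((hx i).sub (hAx i)).sub (.const y)
  have hsumFq :
      Tendsto (fun k => ∑ j, (F j k - q j)) atTop (𝓝 (∑ j, (a j - y) - ∑ j, q j)) := by
    simpa only [Finset.sum_sub_distrib] using hsum.sub_const (∑ j, q j)
  have hlim : Tendsto (fun k => ∑ j, ⟪F j k - q j, u j k - v j⟫_ℝ) atTop
      (𝓝 (-∑ j, ‖v j - y‖ ^ 2)) := by
    rw [funext hdecomp]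
    convert ((tendsto_finsetSum _ fun j _ => (hFq j).tendsto_inner (hdiff j i)).add
      (hui.tendsto_inner hsumFq)).add
      (tendsto_finsetSum _ fun j _ => (hFq j).tendsto_inner tendsto_const_nhds) using 2
    simp only [inner_zero_right, Finset.sum_const_zero, sub_sub_cancel, sub_self,
      inner_zero_left, zero_add, ← Finset.sum_neg_distrib]
    refine Finset.sum_congr rfl fun j _ => ?_
    rw [← neg_sub (v j) y, inner_neg_right, real_inner_self_eq_norm_sq]
  have hnonneg : 0 ≤ -∑ j, ‖v j - y‖ ^ 2 :=
    ge_of_tendsto' hlim fun k => Finset.sum_nonneg fun j _ => hA j (x j k) (a j)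
  have hsum0 : ∑ j, ‖v j - y‖ ^ 2 = 0 :=
    le_antisymm (by linarith) (Finset.sum_nonneg fun j _ => sq_nonneg _)
  have hvi : ‖v i - y‖ ^ 2 = 0 :=
    (Finset.sum_eq_zero_iff_of_nonneg fun j _ => sq_nonneg _).1 hsum0 i (Finset.mem_univ i)
  rw [sq_eq_zero_iff, norm_eq_zero, sub_eq_zero] at hvi
  rw [← hvi, sub_sub_cancel]

end

theorem demiclosedness_conically_averaged_general {H : Type*} [NormedAddCommGroup H]
    [InnerProductSpace ℝ H] [CompleteSpace H] (n : ℕ)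
    (θ : Fin n → ℝ) (hθ : ∀ i, 0 < θ i)
    (T : Fin n → H → H)
    (hT : ∀ i, ∃ R : H → H, (∀ x y : H, ‖R x - R y‖ ≤ ‖x - y‖) ∧
      ∀ x : H, T i x = (1 - θ i) • x + θ i • R x)
    (x : Fin n → ℕ → H) (xl : Fin n → H) (y : H)
    (ha : ∀ i, ∀ u : H,
      Filter.Tendsto (fun k => ⟪x i k, u⟫_ℝ) Filter.atTop (nhds ⟪xl i, u⟫_ℝ))
    (hb : ∀ i, ∀ u : H, Filter.Tendsto (fun k => ⟪T i (x i k), u⟫_ℝ) Filter.atTop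
      (nhds ⟪(2 * θ i) • y + (1 - 2 * θ i) • xl i, u⟫_ℝ))
    (hc : Filter.Tendsto (fun k => ∑ i, (2 * θ i)⁻¹ • (x i k - T i (x i k)))
      Filter.atTop (nhds ((-(n : ℝ)) • y + ∑ i, xl i)))
    (hd : ∀ i j, Filter.Tendsto (fun k => (x i k - x j k) -
        ((2 * θ i)⁻¹ • (x i k - T i (x i k)) - (2 * θ j)⁻¹ • (x j k - T j (x j k))))
      Filter.atTop (nhds 0)) :
    ∀ i, T i (xl i) = (2 * θ i) • y + (1 - 2 * θ i) • xl i := by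
  have hθ2 : ∀ i, 2 * θ i ≠ 0 := fun i => (mul_pos two_pos (hθ i)).ne'
  have hAx : ∀ i, WeakTendsto (fun k => (2 * θ i)⁻¹ • (x i k - T i (x i k))) (xl i - y) :=
    fun i => by
      have := (WeakTendsto.sub (ha i) (hb i)).const_smul (2 * θ i)⁻¹
      rwa [(inv_smul_sub_eq_sub_iff (hθ2 i)).2 rfl] at this
  have hsum : Tendsto (fun k => ∑ i, (2 * θ i)⁻¹ • (x i k - T i (x i k))) atTop
      (𝓝 (∑ i, (xl i - y))) := by
    simpa only [Finset.sum_sub_distrib, Finset.sum_const, Finset.card_univ, Fintype.card_fin,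
      ← Nat.cast_smul_eq_nsmul ℝ, neg_smul, neg_add_eq_sub] using hc
  intro i
  refine (inv_smul_sub_eq_sub_iff (hθ2 i)).1 ?_
  exact IsFirmlyNonexpansive.apply_eq_sub_of_weakTendsto
    (A := fun i z => (2 * θ i)⁻¹ • (z - T i z))
    (fun i => IsConicallyAveraged.isFirmlyNonexpansive (hT i) (hθ i).ne') ha hAx hsum
    (fun i j => (hd i j).congr fun k => by abel) i

/-- Demiclosedness principle for conically averaged operators. -/
theorem demiclosedness_conically_averaged {H : Type*} [NormedAddCommGroup H]
    [InnerProductSpace ℝ H] [CompleteSpace H] (n : ℕ) (hn : 2 ≤ n)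
    (θ : Fin n → ℝ) (hθ : ∀ i, 0 < θ i)
    (T : Fin n → H → H)
    (hT : ∀ i, ∃ R : H → H, (∀ x y : H, ‖R x - R y‖ ≤ ‖x - y‖) ∧
      ∀ x : H, T i x = (1 - θ i) • x + θ i • R x)
    (x : Fin n → ℕ → H) (xl : Fin n → H) (y : H)
    (ha : ∀ i, ∀ u : H,
      Filter.Tendsto (fun k => ⟪x i k, u⟫_ℝ) Filter.atTop (nhds ⟪xl i, u⟫_ℝ))
    (hb : ∀ i, ∀ u : H, Filter.Tendsto (fun k => ⟪T i (x i k), u⟫_ℝ) Filter.atTop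
      (nhds ⟪(2 * θ i) • y + (1 - 2 * θ i) • xl i, u⟫_ℝ))
    (hc : Filter.Tendsto (fun k => ∑ i, (2 * θ i)⁻¹ • (x i k - T i (x i k)))
      Filter.atTop (nhds ((-(n : ℝ)) • y + ∑ i, xl i)))
    (hd : ∀ i j, Filter.Tendsto (fun k => (x i k - x j k) -
        ((2 * θ i)⁻¹ • (x i k - T i (x i k)) - (2 * θ j)⁻¹ • (x j k - T j (x j k))))
      Filter.atTop (nhds 0)) :
    ∀ i, T i (xl i) = (2 * θ i) • y + (1 - 2 * θ i) • xl i :=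
  demiclosedness_conically_averaged_general n θ hθ T hT x xl y ha hb hc hd
end
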